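/- arXiv:1502.00970 — 2 statements merged into one kernel-verified Lean document; each statement's English description precedes it below -/
import Mathlib

section
/- With this setup, for every p with 1 ≤ p < ∞, every g ∈ Γ, and every f ∈ ℓ_p(X), one has lim_{t→0} ‖π_t(g)f − π_0(g)f‖_p = 0; that is, π_t(g) converges to π_0(g) in the strong operator topology as t → 0 (here (π_0(g)f)(x) = f(σ(g⁻¹x))). -/
/-!
`π_t(g)f - π_0(g)f` is `π_0(g)f` multiplied pointwise by the phases `e^{2πitκ(g⁻¹x)} - 1`.
These tend to `0` at every point and have modulus at most `2`, so dominated convergence for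
the series `∑ₓ |·|^p` (this is where `p < ∞` enters) gives convergence in `ℓ_p`.
-/

open Filter Topology
open scoped ENNReal

theorem lp.tendsto_norm_zero_of_dominated {α ι : Type*} {E : ι → Type*}
    [∀ i, NormedAddCommGroup (E i)] {p : ℝ≥0∞} (hp : 0 < p.toReal) {l : Filter α}
    {F : α → lp E p} (v : lp E p) (hF : ∀ i, Tendsto (fun t => ‖F t i‖) l (𝓝 0))
    (hFv : ∀ t i, ‖F t i‖ ≤ ‖v i‖) :
    Tendsto (fun t => ‖F t‖) l (𝓝 0) := by
  have hsum : Tendsto (fun t => ∑' i, ‖F t i‖ ^ p.toReal) l (𝓝 0) := by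
    have hbound : ∀ t i, ‖‖F t i‖ ^ p.toReal‖ ≤ ‖v i‖ ^ p.toReal := fun t i => by
      rw [Real.norm_of_nonneg (by positivity)]
      exact Real.rpow_le_rpow (norm_nonneg _) (hFv t i) hp.le
    simpa using tendsto_tsum_of_dominated_convergence ((lp.memℓp v).summable hp)
      (fun i => (hF i).rpow_const_nhds_zero hp) (Eventually.of_forall hbound)
  simp_rw [lp.norm_eq_tsum_rpow hp]
  exact hsum.rpow_const_nhds_zero (by positivity)

theorem tendsto_exp_two_pi_mul_I_sub_one (n : ℤ) :
    Tendsto (fun t : ℝ => Complex.exp (2 * Real.pi * t * n * Complex.I) - 1) (𝓝 0) (𝓝 0) := by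
  have hcont : Continuous fun t : ℝ => Complex.exp (2 * Real.pi * t * n * Complex.I) - 1 := by
    fun_prop
  simpa using hcont.tendsto 0

theorem norm_exp_two_pi_mul_I_sub_one_le (t : ℝ) (n : ℤ) :
    ‖Complex.exp (2 * Real.pi * t * n * Complex.I) - 1‖ ≤ 2 := by
  have hphase : ‖Complex.exp (2 * Real.pi * t * n * Complex.I)‖ = 1 := by
    rw [Complex.norm_exp]
    simp
  calc ‖Complex.exp (2 * Real.pi * t * n * Complex.I) - 1‖
      ≤ ‖Complex.exp (2 * Real.pi * t * n * Complex.I)‖ + ‖(1 : ℂ)‖ := norm_sub_le _ _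
    _ = 2 := by rw [hphase, norm_one]; norm_num

theorem pi_t_tendsto_pi_zero_general
    {Γ : Type*} [Group Γ]
    (X : Set Γ)
    (σ : Γ → Γ) (κ : Γ → ℤ)
    (hσX : ∀ g : Γ, σ g ∈ X)
    (p : ℝ≥0∞) [Fact (1 ≤ p)] (hp : p ≠ ∞)
    (Pt : ℝ → Γ → (lp (fun _ : X => ℂ) p ≃ₗᵢ[ℂ] lp (fun _ : X => ℂ) p))
    (hPt : ∀ (t : ℝ) (g : Γ) (f : lp (fun _ : X => ℂ) p) (x : X),
      (Pt t g f) x =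
        Complex.exp (2 * Real.pi * t * (κ (g⁻¹ * (x : Γ))) * Complex.I) *
          f ⟨σ (g⁻¹ * (x : Γ)), hσX _⟩) :
    ∀ (g : Γ) (f : lp (fun _ : X => ℂ) p),
      Filter.Tendsto (fun t : ℝ => ‖Pt t g f - Pt 0 g f‖) (nhds 0) (nhds 0) := by
  intro g f
  have hp_pos : 0 < p.toReal :=
    ENNReal.toReal_pos (zero_lt_one.trans_le Fact.out).ne' hp
  have hdiff : ∀ t (x : X), ‖(Pt t g f - Pt 0 g f) x‖ =
      ‖Complex.exp (2 * Real.pi * t * (κ (g⁻¹ * (x : Γ))) * Complex.I) - 1‖ *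
        ‖(Pt 0 g f) x‖ := fun t x => by
    have hPt0 := hPt 0 g f x
    simp only [Complex.ofReal_zero, mul_zero, zero_mul, Complex.exp_zero, one_mul] at hPt0
    rw [lp.coeFn_sub, Pi.sub_apply, hPt, hPt0, ← sub_one_mul, norm_mul]
  refine lp.tendsto_norm_zero_of_dominated hp_pos ((2 : ℂ) • Pt 0 g f) (fun x => ?_) fun t x => ?_
  · simp_rw [hdiff]
    simpa using ((tendsto_exp_two_pi_mul_I_sub_one (κ (g⁻¹ * (x : Γ)))).norm).mul_const
      ‖(Pt 0 g f) x‖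
  · rw [hdiff, lp.coeFn_smul, Pi.smul_apply, norm_smul, Complex.norm_two]
    exact mul_le_mul_of_nonneg_right (norm_exp_two_pi_mul_I_sub_one_le t _) (norm_nonneg _)

theorem pi_t_tendsto_pi_zero
    {Γ : Type*} [Group Γ] (a : Γ) (hinf : ∀ n : ℤ, a ^ n = 1 → n = 0)
    (X : Set Γ) (heX : (1 : Γ) ∈ X)
    (σ : Γ → Γ) (κ : Γ → ℤ)
    (hσX : ∀ g : Γ, σ g ∈ X)
    (hfac : ∀ g : Γ, g = σ g * a ^ κ g)
    (huniq : ∀ g x : Γ, x ∈ X → ∀ n : ℤ, g = x * a ^ n → x = σ g ∧ n = κ g)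
    (p : ℝ≥0∞) [Fact (1 ≤ p)] (hp : p ≠ ∞)
    (Pt : ℝ → Γ → (lp (fun _ : X => ℂ) p ≃ₗᵢ[ℂ] lp (fun _ : X => ℂ) p))
    (hPt : ∀ (t : ℝ) (g : Γ) (f : lp (fun _ : X => ℂ) p) (x : X),
      (Pt t g f) x =
        Complex.exp (2 * Real.pi * t * (κ (g⁻¹ * (x : Γ))) * Complex.I) *
          f ⟨σ (g⁻¹ * (x : Γ)), hσX _⟩) :
    ∀ (g : Γ) (f : lp (fun _ : X => ℂ) p),
      Filter.Tendsto (fun t : ℝ => ‖Pt t g f - Pt 0 g f‖) (nhds 0) (nhds 0) :=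
  pi_t_tendsto_pi_zero_general X σ κ hσX p hp Pt hPt
end

section
/- With this setup, for every p with 1 ≤ p < ∞ and p ≠ 2, and every t ∈ ℝ with t ∉ ℤ, the homomorphism π_t does not belong to the conjugation orbit of π_0: there is no surjective linear isometry U of ℓ_p(X) such that π_t(g) = U ∘ π_0(g) ∘ U⁻¹ for all g ∈ Γ. -/
/-!
STATEMENT 13: With the coset-representative setup, for `1 ≤ p < ∞`, `p ≠ 2`, and `t ∉ ℤ`
(so that the character `χ_t` of `ℤ` is nontrivial), the homomorphism `π_t` is not in the
conjugation orbit of `π_0`: there is no surjective linear isometry `U` of `ℓ_p(X)` with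
`π_t(g) = U ∘ π_0(g) ∘ U⁻¹` for all `g ∈ Γ`.
-/

noncomputable section
open scoped ENNReal

open scoped NNReal

lemma aux_lt_rpow {u : ℝ≥0} (hu0 : u ≠ 0) (hu1 : u < 1) {r : ℝ} (hr0 : 0 < r) (hr : r < 1) :
    u < u ^ r := by
  have h : (u : ℝ) ^ (1 : ℝ) < (u : ℝ) ^ r :=
    Real.rpow_lt_rpow_of_exponent_gt (by positivity) (by exact_mod_cast hu1) hr
  rw [Real.rpow_one] at h
  rw [← NNReal.coe_lt_coe, NNReal.coe_rpow]
  exact h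

lemma aux_rpow_lt {u : ℝ≥0} (hu0 : u ≠ 0) (hu1 : u < 1) {r : ℝ} (hr : 1 < r) :
    u ^ r < u := by
  have h : (u : ℝ) ^ r < (u : ℝ) ^ (1 : ℝ) :=
    Real.rpow_lt_rpow_of_exponent_gt (by positivity) (by exact_mod_cast hu1) hr
  rw [Real.rpow_one] at h
  rw [← NNReal.coe_lt_coe, NNReal.coe_rpow]
  exact h

lemma rpow_split {x y c : ℝ≥0} (hc : c ≠ 0) (r : ℝ) :
    c ^ r * ((x / c) ^ r + (y / c) ^ r) = x ^ r + y ^ r := by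
  have hx : c * (x / c) = x := by rw [mul_comm]; exact div_mul_cancel₀ x hc
  have hy : c * (y / c) = y := by rw [mul_comm]; exact div_mul_cancel₀ y hc
  rw [mul_add, ← NNReal.mul_rpow, ← NNReal.mul_rpow, hx, hy]

lemma strict_subadd {x y : ℝ≥0} (hx : x ≠ 0) (hy : y ≠ 0) {r : ℝ} (h0 : 0 < r) (h1 : r < 1) :
    (x + y) ^ r < x ^ r + y ^ r := by
  set c := x + y with hc
  have hcpos : 0 < c := by positivity
  have hxrc : x / c < 1 := by
    rw [div_lt_one hcpos]
    exact lt_add_of_pos_right x (zero_lt_iff.mpr hy)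
  have hyrc : y / c < 1 := by
    rw [div_lt_one hcpos]
    exact lt_add_of_pos_left y (zero_lt_iff.mpr hx)
  have hsum : x / c + y / c = 1 := by
    rw [← add_div, div_self hcpos.ne']
  have key : (1 : ℝ≥0) < (x / c) ^ r + (y / c) ^ r := by
    calc (1 : ℝ≥0) = x / c + y / c := hsum.symm
    _ < (x / c) ^ r + (y / c) ^ r :=
        add_lt_add (aux_lt_rpow (by positivity) hxrc h0 h1)
          (aux_lt_rpow (by positivity) hyrc h0 h1)
  have hcr : (0 : ℝ≥0) < c ^ r := NNReal.rpow_pos hcpos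
  calc c ^ r = c ^ r * 1 := (mul_one _).symm
  _ < c ^ r * ((x / c) ^ r + (y / c) ^ r) := mul_lt_mul_of_pos_left key hcr
  _ = x ^ r + y ^ r := rpow_split hcpos.ne' r

lemma strict_superadd {x y : ℝ≥0} (hx : x ≠ 0) (hy : y ≠ 0) {r : ℝ} (h1 : 1 < r) :
    x ^ r + y ^ r < (x + y) ^ r := by
  set c := x + y with hc
  have hcpos : 0 < c := by positivity
  have hxrc : x / c < 1 := by
    rw [div_lt_one hcpos]
    exact lt_add_of_pos_right x (zero_lt_iff.mpr hy)
  have hyrc : y / c < 1 := by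
    rw [div_lt_one hcpos]
    exact lt_add_of_pos_left y (zero_lt_iff.mpr hx)
  have hsum : x / c + y / c = 1 := by
    rw [← add_div, div_self hcpos.ne']
  have key : (x / c) ^ r + (y / c) ^ r < 1 := by
    calc (x / c) ^ r + (y / c) ^ r < x / c + y / c :=
        add_lt_add (aux_rpow_lt (by positivity) hxrc h1)
          (aux_rpow_lt (by positivity) hyrc h1)
    _ = 1 := hsum
  have hcr : (0 : ℝ≥0) < c ^ r := NNReal.rpow_pos hcpos
  calc x ^ r + y ^ r = c ^ r * ((x / c) ^ r + (y / c) ^ r) := (rpow_split hcpos.ne' r).symm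
  _ < c ^ r * 1 := mul_lt_mul_of_pos_left key hcr
  _ = c ^ r := mul_one _

lemma half_eq {x y : ℝ≥0} : (x + y) / 2 = (1/2 : ℝ≥0) * x + (1/2 : ℝ≥0) * y := by
  apply NNReal.coe_injective; push_cast; ring

lemma jensen_concave {x y : ℝ≥0} {r : ℝ} (h0 : 0 < r) (h1 : r ≤ 1) :
    x ^ r + y ^ r ≤ 2 * ((x + y) / 2) ^ r := by
  have hp : (1 : ℝ) ≤ 1 / r := by
    rw [le_div_iff₀ h0, one_mul]; exact h1
  have hw : (1/2 : ℝ≥0) + 1/2 = 1 := by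
    apply NNReal.coe_injective; push_cast; ring
  have h := NNReal.rpow_arith_mean_le_arith_mean2_rpow (1/2) (1/2) (x ^ r) (y ^ r) hw hp
  have hxr : (x ^ r) ^ (1/r : ℝ) = x := by
    rw [← NNReal.rpow_mul, mul_one_div_cancel h0.ne', NNReal.rpow_one]
  have hyr : (y ^ r) ^ (1/r : ℝ) = y := by
    rw [← NNReal.rpow_mul, mul_one_div_cancel h0.ne', NNReal.rpow_one]
  rw [hxr, hyr] at h
  have h2 : ((1/2 : ℝ≥0) * x ^ r + 1/2 * y ^ r) ≤ ((1/2 : ℝ≥0) * x + 1/2 * y) ^ r := by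
    have h3 := NNReal.rpow_le_rpow h h0.le
    rwa [← NNReal.rpow_mul, one_div_mul_cancel h0.ne', NNReal.rpow_one] at h3
  rw [half_eq]
  calc x ^ r + y ^ r = 2 * ((1/2 : ℝ≥0) * x ^ r + 1/2 * y ^ r) := by
        apply NNReal.coe_injective; push_cast; ring
  _ ≤ 2 * ((1/2 : ℝ≥0) * x + 1/2 * y) ^ r := mul_le_mul_right h2 2

lemma jensen_convex {x y : ℝ≥0} {r : ℝ} (h1 : 1 ≤ r) :
    2 * ((x + y) / 2) ^ r ≤ x ^ r + y ^ r := by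
  have hw : (1/2 : ℝ≥0) + 1/2 = 1 := by
    apply NNReal.coe_injective; push_cast; ring
  have h := NNReal.rpow_arith_mean_le_arith_mean2_rpow (1/2) (1/2) x y hw h1
  rw [half_eq]
  calc 2 * ((1/2 : ℝ≥0) * x + 1/2 * y) ^ r ≤ 2 * ((1/2 : ℝ≥0) * x ^ r + 1/2 * y ^ r) :=
      mul_le_mul_right h 2
  _ = x ^ r + y ^ r := by apply NNReal.coe_injective; push_cast; ring

-- parallelogram law in ℝ≥0 with rpow 2
lemma para_nnreal (a b : ℂ) :
    ‖a + b‖₊ ^ (2:ℝ) + ‖a - b‖₊ ^ (2:ℝ) = 2 * (‖a‖₊ ^ (2:ℝ) + ‖b‖₊ ^ (2:ℝ)) := by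
  have h := parallelogram_law_with_norm ℂ a b
  apply NNReal.coe_injective
  push_cast [NNReal.rpow_two, coe_nnnorm]
  simpa [pow_two] using h

lemma rpow_q_eq {q : ℝ} (hq : 0 < q) (x : ℝ≥0) : x ^ q = (x ^ (2:ℝ)) ^ (q/2 : ℝ) := by
  rw [← NNReal.rpow_mul]
  congr 1
  ring

lemma clark_le {q : ℝ} (h1 : 1 ≤ q) (h2 : q ≤ 2) (a b : ℂ) :
    ‖a + b‖₊ ^ q + ‖a - b‖₊ ^ q ≤ 2 * (‖a‖₊ ^ q + ‖b‖₊ ^ q) := by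
  have hq0 : (0:ℝ) < q := lt_of_lt_of_le one_pos h1
  have hr0 : (0:ℝ) < q/2 := by linarith
  have hr1 : q/2 ≤ 1 := by linarith
  rw [rpow_q_eq hq0 ‖a + b‖₊, rpow_q_eq hq0 ‖a - b‖₊, rpow_q_eq hq0 ‖a‖₊, rpow_q_eq hq0 ‖b‖₊]
  set A := ‖a + b‖₊ ^ (2:ℝ)
  set B := ‖a - b‖₊ ^ (2:ℝ)
  set S := ‖a‖₊ ^ (2:ℝ)
  set T := ‖b‖₊ ^ (2:ℝ)
  have hAB : A + B = 2 * (S + T) := para_nnreal a b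
  calc A ^ (q/2) + B ^ (q/2) ≤ 2 * ((A + B) / 2) ^ (q/2) := jensen_concave hr0 hr1
  _ = 2 * (S + T) ^ (q/2) := by rw [hAB, mul_div_cancel_left₀ _ (by norm_num : (2:ℝ≥0) ≠ 0)]
  _ ≤ 2 * (S ^ (q/2) + T ^ (q/2)) :=
      mul_le_mul_right (NNReal.rpow_add_le_add_rpow S T hr0.le hr1) 2

lemma clark_lt {q : ℝ} (h1 : 1 ≤ q) (h2 : q < 2) {a b : ℂ} (ha : a ≠ 0) (hb : b ≠ 0) :
    ‖a + b‖₊ ^ q + ‖a - b‖₊ ^ q < 2 * (‖a‖₊ ^ q + ‖b‖₊ ^ q) := by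
  have hq0 : (0:ℝ) < q := lt_of_lt_of_le one_pos h1
  have hr0 : (0:ℝ) < q/2 := by linarith
  have hr1 : q/2 < 1 := by linarith
  rw [rpow_q_eq hq0 ‖a + b‖₊, rpow_q_eq hq0 ‖a - b‖₊, rpow_q_eq hq0 ‖a‖₊, rpow_q_eq hq0 ‖b‖₊]
  set A := ‖a + b‖₊ ^ (2:ℝ)
  set B := ‖a - b‖₊ ^ (2:ℝ)
  set S := ‖a‖₊ ^ (2:ℝ)
  set T := ‖b‖₊ ^ (2:ℝ)
  have hAB : A + B = 2 * (S + T) := para_nnreal a b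
  have hS : S ≠ 0 := by
    simp only [S, ne_eq, NNReal.rpow_eq_zero_iff, nnnorm_eq_zero]
    tauto
  have hT : T ≠ 0 := by
    simp only [T, ne_eq, NNReal.rpow_eq_zero_iff, nnnorm_eq_zero]
    tauto
  calc A ^ (q/2) + B ^ (q/2) ≤ 2 * ((A + B) / 2) ^ (q/2) := jensen_concave hr0 hr1.le
  _ = 2 * (S + T) ^ (q/2) := by rw [hAB, mul_div_cancel_left₀ _ (by norm_num : (2:ℝ≥0) ≠ 0)]
  _ < 2 * (S ^ (q/2) + T ^ (q/2)) := by
      have := strict_subadd hS hT hr0 hr1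
      exact mul_lt_mul_of_pos_left this (by norm_num)

lemma clark_ge {q : ℝ} (h2 : 2 ≤ q) (a b : ℂ) :
    2 * (‖a‖₊ ^ q + ‖b‖₊ ^ q) ≤ ‖a + b‖₊ ^ q + ‖a - b‖₊ ^ q := by
  have hq0 : (0:ℝ) < q := by linarith
  have hr1 : (1:ℝ) ≤ q/2 := by linarith
  rw [rpow_q_eq hq0 ‖a + b‖₊, rpow_q_eq hq0 ‖a - b‖₊, rpow_q_eq hq0 ‖a‖₊, rpow_q_eq hq0 ‖b‖₊]
  set A := ‖a + b‖₊ ^ (2:ℝ)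
  set B := ‖a - b‖₊ ^ (2:ℝ)
  set S := ‖a‖₊ ^ (2:ℝ)
  set T := ‖b‖₊ ^ (2:ℝ)
  have hAB : A + B = 2 * (S + T) := para_nnreal a b
  calc 2 * (S ^ (q/2) + T ^ (q/2)) ≤ 2 * (S + T) ^ (q/2) :=
      mul_le_mul_right (NNReal.add_rpow_le_rpow_add S T hr1) 2
  _ = 2 * ((A + B) / 2) ^ (q/2) := by rw [hAB, mul_div_cancel_left₀ _ (by norm_num : (2:ℝ≥0) ≠ 0)]
  _ ≤ A ^ (q/2) + B ^ (q/2) := jensen_convex hr1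

lemma clark_gt {q : ℝ} (h2 : 2 < q) {a b : ℂ} (ha : a ≠ 0) (hb : b ≠ 0) :
    2 * (‖a‖₊ ^ q + ‖b‖₊ ^ q) < ‖a + b‖₊ ^ q + ‖a - b‖₊ ^ q := by
  have hq0 : (0:ℝ) < q := by linarith
  have hr1 : (1:ℝ) < q/2 := by linarith
  rw [rpow_q_eq hq0 ‖a + b‖₊, rpow_q_eq hq0 ‖a - b‖₊, rpow_q_eq hq0 ‖a‖₊, rpow_q_eq hq0 ‖b‖₊]
  set A := ‖a + b‖₊ ^ (2:ℝ)
  set B := ‖a - b‖₊ ^ (2:ℝ)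
  set S := ‖a‖₊ ^ (2:ℝ)
  set T := ‖b‖₊ ^ (2:ℝ)
  have hAB : A + B = 2 * (S + T) := para_nnreal a b
  have hS : S ≠ 0 := by
    simp only [S, ne_eq, NNReal.rpow_eq_zero_iff, nnnorm_eq_zero]
    tauto
  have hT : T ≠ 0 := by
    simp only [T, ne_eq, NNReal.rpow_eq_zero_iff, nnnorm_eq_zero]
    tauto
  calc 2 * (S ^ (q/2) + T ^ (q/2)) < 2 * (S + T) ^ (q/2) :=
      mul_lt_mul_of_pos_left (strict_superadd hS hT hr1) (by norm_num)
  _ = 2 * ((A + B) / 2) ^ (q/2) := by rw [hAB, mul_div_cancel_left₀ _ (by norm_num : (2:ℝ≥0) ≠ 0)]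
  _ ≤ A ^ (q/2) + B ^ (q/2) := jensen_convex hr1.le

-- real versions
lemma clark_le_real {q : ℝ} (h1 : 1 ≤ q) (h2 : q ≤ 2) (a b : ℂ) :
    ‖a + b‖ ^ q + ‖a - b‖ ^ q ≤ 2 * (‖a‖ ^ q + ‖b‖ ^ q) := by
  have := clark_le h1 h2 a b
  rw [← NNReal.coe_le_coe] at this
  push_cast [← coe_nnnorm] at this ⊢
  exact this

lemma clark_lt_real {q : ℝ} (h1 : 1 ≤ q) (h2 : q < 2) {a b : ℂ} (ha : a ≠ 0) (hb : b ≠ 0) :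
    ‖a + b‖ ^ q + ‖a - b‖ ^ q < 2 * (‖a‖ ^ q + ‖b‖ ^ q) := by
  have := clark_lt h1 h2 ha hb
  rw [← NNReal.coe_lt_coe] at this
  push_cast [← coe_nnnorm] at this ⊢
  exact this

lemma clark_ge_real {q : ℝ} (h2 : 2 ≤ q) (a b : ℂ) :
    2 * (‖a‖ ^ q + ‖b‖ ^ q) ≤ ‖a + b‖ ^ q + ‖a - b‖ ^ q := by
  have := clark_ge h2 a b
  rw [← NNReal.coe_le_coe] at this
  push_cast [← coe_nnnorm] at this ⊢
  exact this

lemma clark_gt_real {q : ℝ} (h2 : 2 < q) {a b : ℂ} (ha : a ≠ 0) (hb : b ≠ 0) :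
    2 * (‖a‖ ^ q + ‖b‖ ^ q) < ‖a + b‖ ^ q + ‖a - b‖ ^ q := by
  have := clark_gt h2 ha hb
  rw [← NNReal.coe_lt_coe] at this
  push_cast [← coe_nnnorm] at this ⊢
  exact this

open scoped ENNReal

section LpLemmas

variable {ι : Type*} (p : ℝ≥0∞) [Fact (1 ≤ p)]

lemma q_pos (hp : p ≠ ∞) : 0 < p.toReal :=
  ENNReal.toReal_pos (by
    intro h0
    have h1 : (1 : ℝ≥0∞) ≤ p := Fact.out
    rw [h0] at h1
    exact (not_le.mpr zero_lt_one) h1) hp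

lemma q_one_le (hp : p ≠ ∞) : 1 ≤ p.toReal := by
  have h1 : (1 : ℝ≥0∞) ≤ p := Fact.out
  have := ENNReal.toReal_mono hp h1
  simpa using this

lemma lp_disj_eq (hp : p ≠ ∞) (A B : lp (fun _ : ι => ℂ) p) (h : ∀ i, A i = 0 ∨ B i = 0) :
    ‖A + B‖ ^ p.toReal + ‖A - B‖ ^ p.toReal = 2 * (‖A‖ ^ p.toReal + ‖B‖ ^ p.toReal) := by
  have hq0 : 0 < p.toReal := q_pos p hp
  have hS1 : HasSum (fun i => ‖(A + B) i‖ ^ p.toReal + ‖(A - B) i‖ ^ p.toReal)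
      (‖A + B‖ ^ p.toReal + ‖A - B‖ ^ p.toReal) :=
    (lp.hasSum_norm hq0 (A + B)).add (lp.hasSum_norm hq0 (A - B))
  have hS2 : HasSum (fun i => 2 * (‖A i‖ ^ p.toReal + ‖B i‖ ^ p.toReal))
      (2 * (‖A‖ ^ p.toReal + ‖B‖ ^ p.toReal)) :=
    ((lp.hasSum_norm hq0 A).add (lp.hasSum_norm hq0 B)).mul_left 2
  have key : (fun i => ‖(A + B) i‖ ^ p.toReal + ‖(A - B) i‖ ^ p.toReal)
      = fun i => 2 * (‖A i‖ ^ p.toReal + ‖B i‖ ^ p.toReal) := by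
    funext i
    have hA : (A + B) i = A i + B i := by rw [lp.coeFn_add]; rfl
    have hB : (A - B) i = A i - B i := by rw [lp.coeFn_sub]; rfl
    rw [hA, hB]
    rcases h i with h0 | h0 <;> rw [h0]
    · simp only [zero_add, zero_sub, norm_neg, norm_zero, Real.zero_rpow hq0.ne']
      ring
    · simp only [add_zero, sub_zero, norm_zero, Real.zero_rpow hq0.ne']
      ring
  rw [key] at hS1
  exact hS1.unique hS2

lemma lp_eq_disj (hp : p ≠ ∞) (hq2 : p.toReal ≠ 2) (A B : lp (fun _ : ι => ℂ) p)
    (h : ‖A + B‖ ^ p.toReal + ‖A - B‖ ^ p.toReal = 2 * (‖A‖ ^ p.toReal + ‖B‖ ^ p.toReal)) :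
    ∀ i, A i = 0 ∨ B i = 0 := by
  by_contra hc
  push_neg at hc
  obtain ⟨i, hAi, hBi⟩ := hc
  have hq0 : 0 < p.toReal := q_pos p hp
  have hq1 : 1 ≤ p.toReal := q_one_le p hp
  have hS1 : HasSum (fun j => ‖A j + B j‖ ^ p.toReal + ‖A j - B j‖ ^ p.toReal)
      (‖A + B‖ ^ p.toReal + ‖A - B‖ ^ p.toReal) := by
    have h2 := (lp.hasSum_norm hq0 (A + B)).add (lp.hasSum_norm hq0 (A - B))
    have key : (fun j => ‖(A + B) j‖ ^ p.toReal + ‖(A - B) j‖ ^ p.toReal)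
        = fun j => ‖A j + B j‖ ^ p.toReal + ‖A j - B j‖ ^ p.toReal := by
      funext j
      have hA : (A + B) j = A j + B j := by rw [lp.coeFn_add]; rfl
      have hB : (A - B) j = A j - B j := by rw [lp.coeFn_sub]; rfl
      rw [hA, hB]
    rwa [key] at h2
  have hS2 : HasSum (fun j => 2 * (‖A j‖ ^ p.toReal + ‖B j‖ ^ p.toReal))
      (2 * (‖A‖ ^ p.toReal + ‖B‖ ^ p.toReal)) :=
    ((lp.hasSum_norm hq0 A).add (lp.hasSum_norm hq0 B)).mul_left 2
  rcases lt_or_gt_of_ne hq2 with hlt | hgt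
  · have hstrict : (‖A + B‖ ^ p.toReal + ‖A - B‖ ^ p.toReal)
        < 2 * (‖A‖ ^ p.toReal + ‖B‖ ^ p.toReal) :=
      hasSum_lt (fun j => clark_le_real hq1 hlt.le (A j) (B j))
        (clark_lt_real hq1 hlt hAi hBi) hS1 hS2
    rw [h] at hstrict
    exact lt_irrefl _ hstrict
  · have hstrict : (2 * (‖A‖ ^ p.toReal + ‖B‖ ^ p.toReal))
        < ‖A + B‖ ^ p.toReal + ‖A - B‖ ^ p.toReal :=
      hasSum_lt (fun j => clark_ge_real hgt.le (A j) (B j))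
        (clark_gt_real hgt hAi hBi) hS2 hS1
    rw [h] at hstrict
    exact lt_irrefl _ hstrict

end LpLemmas

section Support

variable {ι : Type*} (p : ℝ≥0∞) [Fact (1 ≤ p)] [DecidableEq ι]

lemma lp_single_support (hp : p ≠ ∞) (hq2 : p.toReal ≠ 2)
    (V : lp (fun _ : ι => ℂ) p ≃ₗᵢ[ℂ] lp (fun _ : ι => ℂ) p)
    (f : lp (fun _ : ι => ℂ) p) (x₁ : ι) (hVf : V f = lp.single p x₁ (1 : ℂ)) :
    ∀ y1 y2 : ι, f y1 ≠ 0 → f y2 ≠ 0 → y1 = y2 := by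
  intro y1 y2 h1 h2
  by_contra hne
  set g : lp (fun _ : ι => ℂ) p := lp.single p y1 (f y1) with hg
  set h : lp (fun _ : ι => ℂ) p := f - g with hh
  have hsub : ∀ j, h j = f j - g j := by
    intro j; rw [hh, lp.coeFn_sub]; rfl
  have hgy1 : g y1 = f y1 := by
    rw [hg]; exact lp.single_apply_self (E := fun _ : ι => ℂ) p y1 (f y1)
  have hgj : ∀ j, j ≠ y1 → g j = 0 := by
    intro j hj
    rw [hg]; exact lp.single_apply_ne (E := fun _ : ι => ℂ) p y1 (f y1) hj
  have hhy1 : h y1 = 0 := by rw [hsub, hgy1, sub_self]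
  have hdisj : ∀ i, g i = 0 ∨ h i = 0 := by
    intro i
    by_cases hi : i = y1
    · subst hi; right; exact hhy1
    · left; exact hgj i hi
  have hf : g + h = f := by rw [hh]; abel
  have hN : ‖g + h‖ ^ p.toReal + ‖g - h‖ ^ p.toReal
      = 2 * (‖g‖ ^ p.toReal + ‖h‖ ^ p.toReal) := lp_disj_eq p hp g h hdisj
  set G := V g with hG
  set H := V h with hH
  have e1 : ‖G + H‖ = ‖g + h‖ := by rw [← map_add]; exact V.norm_map _
  have e2 : ‖G - H‖ = ‖g - h‖ := by rw [← map_sub]; exact V.norm_map _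
  have e3 : ‖G‖ = ‖g‖ := V.norm_map _
  have e4 : ‖H‖ = ‖h‖ := V.norm_map _
  have hN2 : ‖G + H‖ ^ p.toReal + ‖G - H‖ ^ p.toReal
      = 2 * (‖G‖ ^ p.toReal + ‖H‖ ^ p.toReal) := by rw [e1, e2, e3, e4]; exact hN
  have hdisj2 : ∀ i, G i = 0 ∨ H i = 0 := lp_eq_disj p hp hq2 G H hN2
  have hGHf : G + H = lp.single p x₁ (1 : ℂ) := by
    rw [hG, hH, ← map_add, hf, hVf]
  have hsum : ∀ i, G i + H i = (lp.single (E := fun _ : ι => ℂ) p x₁ (1 : ℂ)) i := by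
    intro i
    rw [← hGHf, lp.coeFn_add]; rfl
  have hzero : ∀ i, i ≠ x₁ → G i = 0 ∧ H i = 0 := by
    intro i hi
    have hs : G i + H i = 0 := by
      rw [hsum i, lp.single_apply_ne (E := fun _ : ι => ℂ) p x₁ _ hi]
    rcases hdisj2 i with h0 | h0
    · constructor
      · exact h0
      · rwa [h0, zero_add] at hs
    · constructor
      · rwa [h0, add_zero] at hs
      · exact h0
  rcases hdisj2 x₁ with h0 | h0
  · have hGzero : G = 0 := by
      apply lp.ext
      funext i
      by_cases hi : i = x₁
      · subst hi; simpa using h0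
      · simpa using (hzero i hi).1
    have : g = 0 := V.injective (by rw [map_zero]; exact hGzero)
    rw [this] at hgy1
    exact h1 (by simpa using hgy1.symm)
  · have hHzero : H = 0 := by
      apply lp.ext
      funext i
      by_cases hi : i = x₁
      · subst hi; simpa using h0
      · simpa using (hzero i hi).2
    have hh0 : h = 0 := V.injective (by rw [map_zero]; exact hHzero)
    have : h y2 = 0 := by rw [hh0]; simp
    rw [hsub, hgj y2 (Ne.symm hne), sub_zero] at this
    exact h2 this

end Support

theorem pi_t_not_conjugate_to_pi_zero
    {Γ : Type*} [Group Γ] (a : Γ) (hinf : ∀ n : ℤ, a ^ n = 1 → n = 0)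
    (X : Set Γ) (heX : (1 : Γ) ∈ X)
    (σ : Γ → Γ) (κ : Γ → ℤ)
    (hσX : ∀ g : Γ, σ g ∈ X)
    (hfac : ∀ g : Γ, g = σ g * a ^ κ g)
    (huniq : ∀ g x : Γ, x ∈ X → ∀ n : ℤ, g = x * a ^ n → x = σ g ∧ n = κ g)
    (p : ℝ≥0∞) [Fact (1 ≤ p)] (hp : p ≠ ∞) (hp2 : p ≠ 2)
    (Pt : ℝ → Γ → (lp (fun _ : X => ℂ) p ≃ₗᵢ[ℂ] lp (fun _ : X => ℂ) p))
    (hPt : ∀ (t : ℝ) (g : Γ) (f : lp (fun _ : X => ℂ) p) (x : X),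
      (Pt t g f) x =
        Complex.exp (2 * Real.pi * t * (κ (g⁻¹ * (x : Γ))) * Complex.I) *
          f ⟨σ (g⁻¹ * (x : Γ)), hσX _⟩)
    (t : ℝ) (ht : ∀ n : ℤ, t ≠ (n : ℝ)) :
    ¬ ∃ U : lp (fun _ : X => ℂ) p ≃ₗᵢ[ℂ] lp (fun _ : X => ℂ) p,
        ∀ (g : Γ) (f : lp (fun _ : X => ℂ) p),
          Pt t g f = U (Pt 0 g (U.symm f)) := by
  classical
  rintro ⟨U, hU⟩
  have hq2 : p.toReal ≠ 2 := by
    intro h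
    apply hp2
    refine (ENNReal.toReal_eq_toReal_iff' hp (by norm_num)).mp ?_
    rw [h]; norm_num
  -- basic facts about σ and κ
  have hσx : ∀ x : X, σ (x : Γ) = (x : Γ) := fun x => (huniq x x x.2 0 (by simp)).1.symm
  have h_inv : (1 : Γ) = σ (a⁻¹ * (1:Γ)) ∧ (-1 : ℤ) = κ (a⁻¹ * (1:Γ)) :=
    huniq (a⁻¹ * 1) 1 heX (-1) (by simp)
  have hne1 : ∀ x : X, (x : Γ) ≠ 1 → σ (a⁻¹ * (x : Γ)) ≠ 1 := by
    intro x hx hσ1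
    have h1 : a⁻¹ * (x : Γ) = σ (a⁻¹ * (x:Γ)) * a ^ (κ (a⁻¹ * (x:Γ))) := hfac _
    rw [hσ1, one_mul] at h1
    have h2 : (x : Γ) = 1 * a ^ (1 + κ (a⁻¹ * (x:Γ))) := by
      rw [one_mul, zpow_add, zpow_one, ← h1]
      group
    have h3 := huniq (x : Γ) 1 heX _ h2
    exact hx (by rw [← hσx x, ← h3.1])
  -- the distinguished basis vector
  set x₁ : X := ⟨1, heX⟩ with hx₁
  set e1 : lp (fun _ : X => ℂ) p := lp.single (E := fun _ : X => ℂ) p x₁ (1:ℂ) with he1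
  set lam : ℂ := Complex.exp (2 * Real.pi * t * ((-1 : ℤ) : ℂ) * Complex.I) with hlam
  have he1self : e1 x₁ = 1 := by
    rw [he1]; exact lp.single_apply_self (E := fun _ : X => ℂ) p x₁ (1:ℂ)
  have he1ne : ∀ x : X, x ≠ x₁ → e1 x = 0 := by
    intro x hx
    rw [he1]; exact lp.single_apply_ne (E := fun _ : X => ℂ) p x₁ (1:ℂ) hx
  -- e1 is an eigenvector of Pt t a with eigenvalue lam
  have hEig1 : Pt t a e1 = lam • e1 := by
    apply lp.ext
    funext x
    have hsm : (lam • e1) x = lam * e1 x := by rw [lp.coeFn_smul]; rfl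
    rw [hPt t a e1 x, hsm]
    by_cases hx : (x : Γ) = 1
    · have hxx : x = x₁ := Subtype.ext hx
      rw [show (a⁻¹ * (x : Γ)) = a⁻¹ * 1 by rw [hx]]
      rw [← h_inv.2]
      have hsub : (⟨σ (a⁻¹ * (1:Γ)), hσX _⟩ : X) = x₁ := Subtype.ext h_inv.1.symm
      rw [hsub, hxx, he1self]
    · have h0 : σ (a⁻¹ * (x : Γ)) ≠ 1 := hne1 x hx
      have hs1 : (⟨σ (a⁻¹ * (x:Γ)), hσX _⟩ : X) ≠ x₁ := by
        intro hc
        exact h0 (congrArg Subtype.val hc)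
      have hs2 : x ≠ x₁ := by
        intro hc
        exact hx (congrArg Subtype.val hc)
      rw [he1ne _ hs1, he1ne _ hs2, mul_zero, mul_zero]
  -- transfer to an eigenvector of Pt 0 a
  set f : lp (fun _ : X => ℂ) p := U.symm e1 with hf
  have hUf : U f = e1 := by rw [hf]; exact U.apply_symm_apply e1
  have hconj : Pt t a e1 = U (Pt 0 a f) := by rw [hf]; exact hU a e1
  have hEig : Pt 0 a f = lam • f := by
    apply U.injective
    rw [← hconj, hEig1, map_smul, hUf]
  -- f has singleton support
  have hsupp : ∀ y1 y2 : X, f y1 ≠ 0 → f y2 ≠ 0 → y1 = y2 :=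
    lp_single_support p hp hq2 U f x₁ hUf
  -- f is nonzero somewhere
  have hfne : ∃ y : X, f y ≠ 0 := by
    by_contra hc
    push_neg at hc
    have hf0 : f = 0 := by
      apply lp.ext
      funext i
      rw [lp.coeFn_zero]
      exact hc i
    have : e1 = 0 := by rw [← hUf, hf0, map_zero]
    rw [this] at he1self
    simp at he1self
  obtain ⟨y, hy⟩ := hfne
  -- evaluate the eigen equation at the point σ(a y)
  set x2 : X := ⟨σ (a * (y:Γ)), hσX _⟩ with hx2
  have hκa : a⁻¹ * σ (a * (y:Γ)) = (y:Γ) * a ^ (-(κ (a * (y:Γ)))) := by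
    have h1 : a * (y:Γ) = σ (a * (y:Γ)) * a ^ (κ (a * (y:Γ))) := hfac _
    have h2 : σ (a * (y:Γ)) = a * (y:Γ) * (a ^ (κ (a * (y:Γ))))⁻¹ := by
      rw [eq_mul_inv_iff_mul_eq, ← h1]
    rw [zpow_neg, h2]
    group
  have hσ2 : σ (a⁻¹ * σ (a * (y:Γ))) = (y:Γ) := (huniq _ (y:Γ) y.2 _ hκa).1.symm
  have hev : f y = lam * f x2 := by
    have h1 : (Pt 0 a f) x2 = (lam • f) x2 := by rw [hEig]
    have hsm : (lam • f) x2 = lam * f x2 := by rw [lp.coeFn_smul]; rfl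
    rw [hsm] at h1
    rw [hPt 0 a f x2] at h1
    have hc : ((x2 : Γ)) = σ (a * (y:Γ)) := rfl
    rw [show (a⁻¹ * (x2 : Γ)) = a⁻¹ * σ (a * (y:Γ)) by rw [hc]] at h1
    have hsub : (⟨σ (a⁻¹ * σ (a * (y:Γ))), hσX _⟩ : X) = y := Subtype.ext hσ2
    rw [hsub] at h1
    have hexp : Complex.exp (2 * Real.pi * (0:ℝ) * (κ (a⁻¹ * σ (a * (y:Γ))) : ℂ) * Complex.I)
        = 1 := by
      norm_num
    rw [hexp, one_mul] at h1
    exact h1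
  have hx2ne : f x2 ≠ 0 := by
    intro h0
    rw [h0, mul_zero] at hev
    exact hy hev
  have hx2y : x2 = y := hsupp x2 y hx2ne hy
  rw [hx2y] at hev
  have hlam1 : lam = 1 := by
    have h1 : lam * f y = 1 * f y := by rw [one_mul, ← hev]
    exact mul_right_cancel₀ hy h1
  rw [hlam, Complex.exp_eq_one_iff] at hlam1
  obtain ⟨n, hn⟩ := hlam1
  have hπI : ((2:ℂ) * Real.pi * Complex.I) ≠ 0 := by
    refine mul_ne_zero (mul_ne_zero two_ne_zero ?_) Complex.I_ne_zero
    exact_mod_cast Real.pi_ne_zero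
  have ht' : (-t : ℂ) = (n : ℂ) := by
    apply mul_right_cancel₀ hπI
    calc (-t : ℂ) * (2 * Real.pi * Complex.I)
        = 2 * Real.pi * t * ((-1 : ℤ) : ℂ) * Complex.I := by push_cast; ring
    _ = (n : ℂ) * (2 * Real.pi * Complex.I) := hn
  have htr : -t = (n : ℝ) := by exact_mod_cast ht'
  exact ht (-n) (by push_cast; linarith)
end
end
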